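/- arXiv:2108.13336 — 4 statements merged into one kernel-verified Lean document; each statement's English description precedes it below -/
import Mathlib

section
/- Let A, B be maps from a real vector space V of test functions to an ℝ-vector space of functionals on configurations, each satisfying the Hammerstein-type relation A(f+g+h) = A(f+g) − A(g) + A(g+h) whenever supp f ∩ supp h = ∅, together with supp A(f) ⊆ supp f. Define two such generalized fields A, A' to be equivalent if supp((A−A')(f)) ⊆ supp(f−1) for all f. Then equivalent generalized fields have the same support, where supp A := {x | x ∈ supp A(f) for all f with f ≡ 1 near x}. -/
/-- `N` is a support for the functional `F`: shifts by configurations `ψ` whose support is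
disjoint from `N` leave `F` unchanged. -/
def IsSuppIn {M : Type*} (F : (M → ℝ) → ℝ) (N : Set M) : Prop :=
  ∀ ψ φ : M → ℝ, Disjoint (Function.support ψ) N → F (φ + ψ) = F φ

/-- The support of a functional: the intersection of all closed supporting sets
(the smallest closed set `N` such that `F[φ+ψ] = F[φ]` whenever `supp ψ ∩ N = ∅`). -/
def fsupp {M : Type*} [TopologicalSpace M] (F : (M → ℝ) → ℝ) : Set M :=
  ⋂₀ {N : Set M | IsClosed N ∧ IsSuppIn F N}

/-- The support of a generalized field `A`:
`x ∈ supp A` iff `x ∈ supp A(f)` for all test functions `f ≡ 1` near `x`. -/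
def gsupp {M : Type*} [TopologicalSpace M] (A : (M → ℝ) → (M → ℝ) → ℝ) : Set M :=
  {x | ∀ f : M → ℝ, (∀ᶠ y in nhds x, f y = 1) → x ∈ fsupp (A f)}


lemma fsupp_neg {M : Type*} [TopologicalSpace M] (F : (M → ℝ) → ℝ) :
    fsupp (-F) = fsupp F := by
  have : ∀ N, IsSuppIn (-F) N ↔ IsSuppIn F N := by
    intro N
    constructor <;> intro h ψ φ hd <;> have := h ψ φ hd <;>
      simp only [Pi.neg_apply, neg_inj] at this ⊢ <;> exact this
  unfold fsupp
  have hset : {N : Set M | IsClosed N ∧ IsSuppIn (-F) N} = {N : Set M | IsClosed N ∧ IsSuppIn F N} := by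
    ext N
    simp [this]
  rw [hset]

lemma gsupp_mono {M : Type*} [TopologicalSpace M]
    (A A' : (M → ℝ) → (M → ℝ) → ℝ)
    (heq : ∀ f : M → ℝ, fsupp (A f - A' f) ⊆ tsupport (f - 1)) :
    gsupp A ⊆ gsupp A' := by
  intro x hx f hf
  have hxA : x ∈ fsupp (A f) := hx f hf
  -- x is not in tsupport (f - 1)
  have hxt : x ∉ tsupport (f - 1) := by
    rw [notMem_tsupport_iff_eventuallyEq]
    filter_upwards [hf] with y hy
    simp [hy]
  have hxD : x ∉ fsupp (A f - A' f) := fun h => hxt (heq f h)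
  by_contra hxA'
  -- get closed supporting sets avoiding x
  rw [fsupp, Set.mem_sInter] at hxD hxA'
  push_neg at hxD hxA'
  obtain ⟨N1, ⟨hN1c, hN1s⟩, hxN1⟩ := hxD
  obtain ⟨N2, ⟨hN2c, hN2s⟩, hxN2⟩ := hxA'
  have hsupp : IsSuppIn (A f) (N1 ∪ N2) := by
    intro ψ φ hd
    have h1 := hN1s ψ φ (hd.mono_right Set.subset_union_left)
    have h2 := hN2s ψ φ (hd.mono_right Set.subset_union_right)
    simp only [Pi.sub_apply] at h1
    linarith
  have : x ∈ N1 ∪ N2 := hxA (N1 ∪ N2) ⟨hN1c.union hN2c, hsupp⟩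
  rcases this with h | h
  · exact hxN1 h
  · exact hxN2 h

/-- Equivalent generalized fields (`supp ((A − A')(f)) ⊆ supp (f − 1)` for all `f`)
have the same support. -/
theorem stmt5 {M : Type*} [TopologicalSpace M]
    (A A' : (M → ℝ) → (M → ℝ) → ℝ)
    (hA : ∀ f : M → ℝ, fsupp (A f) ⊆ tsupport f)
    (hA' : ∀ f : M → ℝ, fsupp (A' f) ⊆ tsupport f)
    (hHam : ∀ f g h : M → ℝ, Disjoint (Function.support f) (Function.support h) →
      A (f + g + h) = A (f + g) - A g + A (g + h))
    (hHam' : ∀ f g h : M → ℝ, Disjoint (Function.support f) (Function.support h) →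
      A' (f + g + h) = A' (f + g) - A' g + A' (g + h))
    (heq : ∀ f : M → ℝ, fsupp (A f - A' f) ⊆ tsupport (f - 1)) :
    gsupp A = gsupp A' := by
  refine Set.Subset.antisymm (gsupp_mono A A' heq) (gsupp_mono A' A fun f => ?_)
  have : A' f - A f = -(A f - A' f) := by ext φ; simp
  rw [this, fsupp_neg]
  exact heq f
end

section
/- Let X be a set equipped with a partial 'sum' structure of functionals with supports, and let Z₁, Z₂ be bijections of X each satisfying the locality property Z(F+G+H) = Z(F+G) − Z(G) + Z(G+H) whenever supp F ∩ supp H = ∅ and the support-preservation property supp(Z(F+G) − Z(G)) = supp F. Then the composition Z₁ ∘ Z₂ also satisfies the locality property: Z₁Z₂(F+G+H) = Z₁Z₂(F+G) − Z₁Z₂(G) + Z₁Z₂(G+H) for supp F ∩ supp H = ∅. -/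
/-- The composition of two local bijections (satisfying the locality property and support
preservation) again satisfies the locality property. -/
theorem stmt15 {X P : Type*} [AddCommGroup X] (supp : X → Set P)
    (hsub : ∀ F G : X, supp (F + G) ⊆ supp F ∪ supp G)
    (hsub' : ∀ F G : X, supp (F - G) ⊆ supp F ∪ supp G)
    (Z₁ Z₂ : X → X) (hb₁ : Function.Bijective Z₁) (hb₂ : Function.Bijective Z₂)
    (hloc₁ : ∀ F G H : X, supp F ∩ supp H = ∅ →
      Z₁ (F + G + H) = Z₁ (F + G) - Z₁ G + Z₁ (G + H))
    (hloc₂ : ∀ F G H : X, supp F ∩ supp H = ∅ →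
      Z₂ (F + G + H) = Z₂ (F + G) - Z₂ G + Z₂ (G + H))
    (hsp₁ : ∀ F G : X, supp (Z₁ (F + G) - Z₁ G) = supp F)
    (hsp₂ : ∀ F G : X, supp (Z₂ (F + G) - Z₂ G) = supp F) :
    ∀ F G H : X, supp F ∩ supp H = ∅ →
      Z₁ (Z₂ (F + G + H)) = Z₁ (Z₂ (F + G)) - Z₁ (Z₂ G) + Z₁ (Z₂ (G + H)) := by
  intro F G H hFH
  have hAC : supp (Z₂ (F + G) - Z₂ G) ∩ supp (Z₂ (G + H) - Z₂ G) = ∅ := by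
    have h := hsp₂ H G
    rw [add_comm H G] at h
    rw [hsp₂, h]; exact hFH
  have h2 : Z₂ (F + G + H) =
      (Z₂ (F + G) - Z₂ G) + Z₂ G + (Z₂ (G + H) - Z₂ G) := by
    rw [hloc₂ F G H hFH]; abel
  have h1 := hloc₁ (Z₂ (F + G) - Z₂ G) (Z₂ G) (Z₂ (G + H) - Z₂ G) hAC
  rw [h2, h1, sub_add_cancel, add_sub_cancel]
end

section
/- Let Z be a bijection of a set of functionals satisfying the locality property Z(F+G+H) = Z(F+G) − Z(G) + Z(G+H) for supp F ∩ supp H = ∅ and supp(Z(F+G) − Z(G)) = supp F for all admissible F, G. Then the inverse Z⁻¹ also satisfies the locality property: Z⁻¹(F+G+H) = Z⁻¹(F+G) − Z⁻¹(G) + Z⁻¹(G+H) whenever supp F ∩ supp H = ∅, and moreover supp(Z⁻¹(F+G) − Z⁻¹(G)) = supp F. -/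
/-- The inverse of a local bijection (satisfying locality and support preservation) again
satisfies locality and support preservation. -/
theorem stmt16 {X P : Type*} [AddCommGroup X] (supp : X → Set P)
    (Z : X ≃ X)
    (hloc : ∀ F G H : X, supp F ∩ supp H = ∅ →
      Z (F + G + H) = Z (F + G) - Z G + Z (G + H))
    (hsp : ∀ F G : X, supp (Z (F + G) - Z G) = supp F) :
    (∀ F G H : X, supp F ∩ supp H = ∅ →
      Z.symm (F + G + H) = Z.symm (F + G) - Z.symm G + Z.symm (G + H)) ∧
    (∀ F G : X, supp (Z.symm (F + G) - Z.symm G) = supp F) := by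
  have hsp' : ∀ F G : X, supp (Z.symm (F + G) - Z.symm G) = supp F := by
    intro F G
    have h := hsp (Z.symm (F + G) - Z.symm G) (Z.symm G)
    have e1 : Z.symm (F + G) - Z.symm G + Z.symm G = Z.symm (F + G) := by abel
    rw [e1, Z.apply_symm_apply, Z.apply_symm_apply] at h
    have e2 : F + G - G = F := by abel
    rw [e2] at h
    exact h.symm
  refine ⟨?_, hsp'⟩
  intro F G H hdis
  have hdis' : supp (Z.symm (F + G) - Z.symm G) ∩ supp (Z.symm (G + H) - Z.symm G) = ∅ := by
    rw [hsp' F G, add_comm G H, hsp' H G]; exact hdis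
  have key := hloc (Z.symm (F + G) - Z.symm G) (Z.symm G) (Z.symm (G + H) - Z.symm G) hdis'
  have e1 : Z.symm (F + G) - Z.symm G + Z.symm G = Z.symm (F + G) := by abel
  have e2 : Z.symm G + (Z.symm (G + H) - Z.symm G) = Z.symm (G + H) := by abel
  rw [e1, e2, Z.apply_symm_apply, Z.apply_symm_apply, Z.apply_symm_apply] at key
  have e3 : F + G - G + (G + H) = F + G + H := by abel
  rw [e3] at key
  have h4 := congrArg Z.symm key
  rw [Z.symm_apply_apply] at h4
  rw [← h4]; abel
end

section
/- Let d ≥ 3 and let t₀, t₁ be smooth real functions on a manifold M whose differentials dt₀, dt₁ are everywhere nonzero and timelike for Lorentzian metrics g₀, g₁ respectively, and suppose the convex combinations λ dt₁ + (1−λ) dt₀ are nowhere vanishing for λ ∈ [0,1]. Given Riemannian metrics γ₀, γ₁ defined by γᵢ(Y,Y) = 2aᵢ⟨dtᵢ,Y⟩² − gᵢ(Y,Y) with aᵢ = (gᵢ⁻¹(dtᵢ,dtᵢ))⁻¹, and a vector field X with ⟨dtᵢ,X⟩ = 1, define gᵢ' = k dtᵢ² − γᵢ. Then for k > max(1 +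 γ₀(X,X), 1 + γ₁(X,X), 2a₀, 2a₁), the vector field X is timelike for both g₀' and g₁', and gᵢ' ≥ gᵢ (i.e., gᵢ'(Y,Y) ≥ gᵢ(Y,Y) for all Y), so the lightcones of gᵢ' contain those of gᵢ. -/
/-- Interpolating metrics: with `γᵢ(Y,Y) = 2aᵢ ⟨dtᵢ,Y⟩² − gᵢ(Y,Y)` and
`gᵢ' = k dtᵢ² − γᵢ`, for `k > max (1 + γᵢ(X,X)) (2aᵢ)` the vector field `X` (normalized by
`⟨dtᵢ,X⟩ = 1`) is timelike for both `g₀'` and `g₁'`, and `gᵢ' ≥ gᵢ` pointwise, so the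
lightcones of `gᵢ'` contain those of `gᵢ`. -/
theorem stmt19 {M V : Type*} [AddCommGroup V] [Module ℝ V]
    (g : Fin 2 → M → V →ₗ[ℝ] V →ₗ[ℝ] ℝ)
    (dt : Fin 2 → M → (V →ₗ[ℝ] ℝ))
    (a : Fin 2 → M → ℝ) (X : M → V) (k : ℝ)
    (ha : ∀ i x, 0 < a i x)
    (hdt : ∀ i x, dt i x ≠ 0)
    (hconvex : ∀ (x : M) (lam : ℝ), 0 ≤ lam → lam ≤ 1 →
      lam • dt 1 x + (1 - lam) • dt 0 x ≠ 0)
    (hX : ∀ i x, dt i x (X x) = 1)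
    (hk1 : ∀ i x, 1 + (2 * a i x * (dt i x (X x)) ^ 2 - g i x (X x) (X x)) < k)
    (hk2 : ∀ i x, 2 * a i x < k) :
    (∀ i x, 0 < k * (dt i x (X x)) ^ 2
        - (2 * a i x * (dt i x (X x)) ^ 2 - g i x (X x) (X x))) ∧
    (∀ i x (Y : V), g i x Y Y ≤ k * (dt i x Y) ^ 2
        - (2 * a i x * (dt i x Y) ^ 2 - g i x Y Y)) := by
  constructor
  · intro i x
    have h1 := hk1 i x
    rw [hX i x] at h1 ⊢
    nlinarith
  · intro i x Y
    have h2 := hk2 i x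
    nlinarith [sq_nonneg (dt i x Y)]
end
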